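/- If H is a k-uniform hypergraph with n vertices, m edges, maximum degree Δ and Zagreb index Z(H), then BE(H) ≥ √((km)^3/(k·Z(H))) ≥ √k·m/√Δ. -/

import Mathlib

open Matrix BigOperators Finset

/-- Incidence matrix of a hypergraph on vertex set `Fin n` with edges `E : Fin m → Finset (Fin n)`. -/
noncomputable def inc {n m : ℕ} (E : Fin m → Finset (Fin n)) : Matrix (Fin n) (Fin m) ℝ :=
  fun v e => if v ∈ E e then 1 else 0

/-- Adjacency matrix of the line multigraph: `(e,f)`-entry is `|E e ∩ E f|` for `e ≠ f`, `0` on diagonal. -/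
noncomputable def lineAdj {n m : ℕ} (E : Fin m → Finset (Fin n)) : Matrix (Fin m) (Fin m) ℝ :=
  fun e f => if e = f then 0 else ((E e ∩ E f).card : ℝ)

/-- Adjacency matrix of the clique multigraph: `(u,v)`-entry is the number of edges containing both. -/
noncomputable def cliqueAdj {n m : ℕ} (E : Fin m → Finset (Fin n)) : Matrix (Fin n) (Fin n) ℝ :=
  fun u v => if u = v then 0 else ((univ.filter fun e => u ∈ E e ∧ v ∈ E e).card : ℝ)

/-- Degree of a vertex: number of edges containing it. -/
def deg {n m : ℕ} (E : Fin m → Finset (Fin n)) (v : Fin n) : ℕ :=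
  (univ.filter fun e => v ∈ E e).card

/-!
The signless Laplacian `Q = B Bᵀ` is positive semidefinite, its trace is `∑ d(v) = km`, and
`tr Q² = ∑ Q_vu Q_uv ≤ ∑_v d(v) ∑_u Q_vu = ∑_v d(v) · k d(v) = kZ`, because `Q_uv ≤ d(v)` and each
row of `Q` sums to `k d(v)`. Two Cauchy–Schwarz steps, `(∑ a²)² ≤ ∑ a · ∑ a³` and
`(∑ a³)² ≤ ∑ a² · ∑ a⁴`, give `(∑ a²)³ ≤ (∑ a)² ∑ a⁴` for `a ≥ 0`; with `a_i = √λ_i` this reads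
`(km)³ ≤ BE(H)² · kZ`. The comparison with `√k m / √Δ` is `km ≤ Z ≤ Δ km`.
-/

namespace Matrix.IsHermitian

variable {𝕜 n : Type*} [RCLike 𝕜] [Fintype n] [DecidableEq n] {A : Matrix n n 𝕜}

theorem trace_mul_self_eq_sum_sq_eigenvalues (hA : A.IsHermitian) :
    (A * A).trace = ∑ i, ((hA.eigenvalues i ^ 2 : ℝ) : 𝕜) := by
  conv_lhs => rw [hA.spectral_theorem, ← map_mul, Unitary.conjStarAlgAut_apply, trace_mul_cycle,
    Unitary.coe_star_mul_self, one_mul, diagonal_mul_diagonal, trace_diagonal]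
  simp [sq]

end Matrix.IsHermitian

theorem Finset.sum_sq_pow_three_le_sq_sum_mul_sum_pow_four {ι R : Type*} [CommSemiring R]
    [LinearOrder R] [IsStrictOrderedRing R] [ExistsAddOfLE R] (s : Finset ι) {a : ι → R}
    (ha : ∀ i ∈ s, 0 ≤ a i) :
    (∑ i ∈ s, a i ^ 2) ^ 3 ≤ (∑ i ∈ s, a i) ^ 2 * ∑ i ∈ s, a i ^ 4 := by
  have h12 : (∑ i ∈ s, a i ^ 2) ^ 2 ≤ (∑ i ∈ s, a i) * ∑ i ∈ s, a i ^ 3 :=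
    sum_sq_le_sum_mul_sum_of_sq_le_mul s ha (fun i hi => pow_nonneg (ha i hi) 3)
      (fun i _ => by ring_nf; rfl)
  have h23 : (∑ i ∈ s, a i ^ 3) ^ 2 ≤ (∑ i ∈ s, a i ^ 2) * ∑ i ∈ s, a i ^ 4 :=
    sum_sq_le_sum_mul_sum_of_sq_le_mul s (fun i hi => pow_nonneg (ha i hi) 2)
      (fun i hi => pow_nonneg (ha i hi) 4) (fun i _ => by ring_nf; rfl)
  have hsum_sq : 0 ≤ ∑ i ∈ s, a i ^ 2 := sum_nonneg fun i hi => pow_nonneg (ha i hi) 2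
  obtain h0 | hpos := hsum_sq.eq_or_lt
  · rw [← h0, zero_pow three_ne_zero]
    exact mul_nonneg (sq_nonneg _) (sum_nonneg fun i hi => pow_nonneg (ha i hi) 4)
  refine le_of_mul_le_mul_right ?_ hpos
  calc (∑ i ∈ s, a i ^ 2) ^ 3 * ∑ i ∈ s, a i ^ 2 = ((∑ i ∈ s, a i ^ 2) ^ 2) ^ 2 := by ring
    _ ≤ ((∑ i ∈ s, a i) * ∑ i ∈ s, a i ^ 3) ^ 2 := by gcongr
    _ = (∑ i ∈ s, a i) ^ 2 * (∑ i ∈ s, a i ^ 3) ^ 2 := by ring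
    _ ≤ (∑ i ∈ s, a i) ^ 2 * ((∑ i ∈ s, a i ^ 2) * ∑ i ∈ s, a i ^ 4) := by
      gcongr; exact sq_nonneg _
    _ = _ := by ring

theorem Real.sum_pow_three_le_sq_sum_sqrt_mul_sum_sq {ι : Type*} (s : Finset ι) {x : ι → ℝ}
    (hx : ∀ i ∈ s, 0 ≤ x i) :
    (∑ i ∈ s, x i) ^ 3 ≤ (∑ i ∈ s, √(x i)) ^ 2 * ∑ i ∈ s, x i ^ 2 := by
  have hsqrt_pow_four (i) (hi : i ∈ s) : √(x i) ^ 4 = x i ^ 2 := by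
    rw [show 4 = 2 * 2 by rfl, pow_mul, Real.sq_sqrt (hx i hi)]
  have := s.sum_sq_pow_three_le_sq_sum_mul_sum_pow_four fun i _ => Real.sqrt_nonneg (x i)
  rwa [sum_congr rfl fun i hi => Real.sq_sqrt (hx i hi),
    sum_congr rfl hsqrt_pow_four] at this

section Hypergraph

variable {n m k : ℕ} (E : Fin m → Finset (Fin n))

theorem sum_card_filter_mem (hk : ∀ e, (E e).card = k) (S : Finset (Fin m)) :
    ∑ u, #{e ∈ S | u ∈ E e} = k * #S := by
  have := sum_card_bipartiteAbove_eq_sum_card_bipartiteBelow (s := univ) (t := S)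
    (r := fun u e => u ∈ E e)
  simp only [bipartiteAbove, bipartiteBelow, filter_univ_mem, hk, sum_const, smul_eq_mul] at this
  rw [this, mul_comm]

theorem sum_deg (hk : ∀ e, (E e).card = k) : ∑ v, deg E v = k * m := by
  simpa [deg] using sum_card_filter_mem E hk univ

theorem inc_mul_transpose_apply (u v : Fin n) :
    (inc E * (inc E)ᵀ) u v = #{e | u ∈ E e ∧ v ∈ E e} := by
  rw [mul_apply, card_filter]
  push_cast
  refine sum_congr rfl fun e _ => ?_
  simp only [inc, transpose_apply]
  split_ifs <;> simp_all

theorem inc_mul_transpose_apply_le_deg (u v : Fin n) : (inc E * (inc E)ᵀ) u v ≤ deg E v := by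
  rw [inc_mul_transpose_apply, deg]
  exact_mod_cast card_le_card fun e he => by simp_all

theorem sum_inc_mul_transpose_apply (hk : ∀ e, (E e).card = k) (v : Fin n) :
    ∑ u, (inc E * (inc E)ᵀ) v u = k * deg E v := by
  have := sum_card_filter_mem E hk {e | v ∈ E e}
  simp only [filter_filter] at this
  simp only [inc_mul_transpose_apply, deg]
  exact_mod_cast this

theorem trace_inc_mul_transpose (hk : ∀ e, (E e).card = k) :
    (inc E * (inc E)ᵀ).trace = k * m := by
  simp only [trace, diag_apply, inc_mul_transpose_apply, and_self]
  exact_mod_cast sum_deg E hk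

theorem trace_inc_mul_transpose_mul_self_le (hk : ∀ e, (E e).card = k) :
    (inc E * (inc E)ᵀ * (inc E * (inc E)ᵀ)).trace ≤ k * ∑ v, (deg E v : ℝ) ^ 2 := by
  calc _ = ∑ v, ∑ u, (inc E * (inc E)ᵀ) v u * (inc E * (inc E)ᵀ) u v := by
        simp only [trace, diag_apply, mul_apply]
    _ ≤ ∑ v, ∑ u, (inc E * (inc E)ᵀ) v u * deg E v := by
      gcongr with v _ u _
      · rw [inc_mul_transpose_apply]; positivity
      · exact inc_mul_transpose_apply_le_deg E u v
    _ = k * ∑ v, (deg E v : ℝ) ^ 2 := by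
      simp only [← sum_mul, sum_inc_mul_transpose_apply E hk, mul_sum]
      ring_nf

theorem mul_le_sum_deg_sq (hk : ∀ e, (E e).card = k) :
    (k * m : ℝ) ≤ ∑ v, (deg E v : ℝ) ^ 2 := by
  rw [← Nat.cast_mul, ← sum_deg E hk, Nat.cast_sum]
  gcongr with v
  exact_mod_cast Nat.le_self_pow two_ne_zero _

theorem sum_deg_sq_le_sup_deg_mul (hk : ∀ e, (E e).card = k) :
    ∑ v, (deg E v : ℝ) ^ 2 ≤ univ.sup (deg E) * (k * m) := by
  rw [← Nat.cast_mul, ← sum_deg E hk, Nat.cast_sum, mul_sum]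
  gcongr with v
  rw [sq]
  gcongr
  exact_mod_cast le_sup (mem_univ v)

end Hypergraph

theorem sqrt_mul_div_sqrt_le_sqrt_pow_three_div {k m Δ Z : ℝ} (hk : 0 ≤ k) (hm : 0 ≤ m)
    (hΔ : 0 ≤ Δ) (hZ_lower : k * m ≤ Z) (hZ_upper : Z ≤ Δ * (k * m)) :
    √k * m / √Δ ≤ √((k * m) ^ 3 / (k * Z)) := by
  rw [show √k * m / √Δ = √(k * m ^ 2 / Δ) by
    rw [Real.sqrt_div' _ hΔ, Real.sqrt_mul hk, Real.sqrt_sq hm]]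
  refine Real.sqrt_le_sqrt ?_
  obtain hkm | hkm := (mul_nonneg hk hm).eq_or_lt
  · rcases mul_eq_zero.mp hkm.symm with rfl | rfl <;> simp
  have hZ : 0 < Z := hkm.trans_le hZ_lower
  have hΔ : 0 < Δ := pos_of_mul_pos_left (hZ.trans_le hZ_upper) hkm.le
  calc k * m ^ 2 / Δ = (k * m) ^ 3 / (k * (Δ * (k * m))) := by field_simp
    _ ≤ (k * m) ^ 3 / (k * Z) := by
      have : 0 < k := pos_of_mul_pos_left hkm hm
      gcongr

theorem stmt13_general {n m k : ℕ} (E : Fin m → Finset (Fin n))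
    (hk : ∀ e, (E e).card = k)
    (hQ : (inc E * (inc E)ᵀ).IsHermitian)
    (Z : ℝ) (hZ : Z = ∑ v, (deg E v : ℝ) ^ 2)
    (Δ : ℕ) (hΔ : Δ = univ.sup (deg E)) :
    Real.sqrt k * m / Real.sqrt Δ ≤ Real.sqrt ((k * m : ℝ) ^ 3 / (k * Z)) ∧
    Real.sqrt ((k * m : ℝ) ^ 3 / (k * Z)) ≤ ∑ i, Real.sqrt (hQ.eigenvalues i) := by
  have hZ_lower : (k * m : ℝ) ≤ Z := hZ ▸ mul_le_sum_deg_sq E hk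
  have hZ_upper : Z ≤ Δ * (k * m) := hZ ▸ hΔ ▸ sum_deg_sq_le_sup_deg_mul E hk
  refine ⟨sqrt_mul_div_sqrt_le_sqrt_pow_three_div (by positivity) (by positivity) (by positivity)
    hZ_lower hZ_upper, ?_⟩
  have heig_nonneg (i : Fin n) : 0 ≤ hQ.eigenvalues i := by
    have := (inc E).posSemidef_self_mul_conjTranspose
    rw [conjTranspose_eq_transpose_of_trivial] at this
    exact this.eigenvalues_nonneg i
  have hsum : ∑ i, hQ.eigenvalues i = k * m := by
    simpa using hQ.trace_eq_sum_eigenvalues.symm.trans (trace_inc_mul_transpose E hk)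
  have hsum_sq : ∑ i, hQ.eigenvalues i ^ 2 ≤ k * Z := by
    simpa [hZ] using hQ.trace_mul_self_eq_sum_sq_eigenvalues.symm.trans_le
      (trace_inc_mul_transpose_mul_self_le E hk)
  have hpower := Real.sum_pow_three_le_sq_sum_sqrt_mul_sum_sq univ fun i _ => heig_nonneg i
  rw [hsum] at hpower
  have hkZ : 0 ≤ (k * Z : ℝ) := by
    have : (0 : ℝ) ≤ k * m := by positivity
    exact mul_nonneg k.cast_nonneg (this.trans hZ_lower)
  refine Real.sqrt_le_iff.mpr ⟨sum_nonneg fun i _ => Real.sqrt_nonneg _,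
    div_le_of_le_mul₀ hkZ (sq_nonneg _) (hpower.trans ?_)⟩
  gcongr

/-- `BE(H) ≥ √((km)³/(k Z(H))) ≥ √k·m/√Δ`. -/
theorem stmt13 {n m k : ℕ} (E : Fin m → Finset (Fin n))
    (hk2 : 2 ≤ k) (hk : ∀ e, (E e).card = k)
    (hQ : (inc E * (inc E)ᵀ).IsHermitian)
    (Z : ℝ) (hZ : Z = ∑ v, (deg E v : ℝ) ^ 2)
    (Δ : ℕ) (hΔ : Δ = univ.sup (deg E)) :
    Real.sqrt k * m / Real.sqrt Δ ≤ Real.sqrt ((k * m : ℝ) ^ 3 / (k * Z)) ∧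
    Real.sqrt ((k * m : ℝ) ^ 3 / (k * Z)) ≤ ∑ i, Real.sqrt (hQ.eigenvalues i) :=
  stmt13_general E hk hQ Z hZ Δ hΔ
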